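/- For every finite simple graph G, |ker(G)| + |diadem(G)| ≤ 2α(G), where α(G) is the independence number. -/
import Mathlib


open Classical Finset

/-- Neighborhood of a set of vertices: all vertices adjacent to some vertex of `X`. -/
noncomputable def nbhd {V : Type*} (G : SimpleGraph V) [Fintype V] (X : Finset V) : Finset V :=
  Finset.univ.filter (fun v => ∃ x ∈ X, G.Adj x v)

/-- The difference `d(X) = |X| - |N(X)|`. -/
noncomputable def gdiff {V : Type*} (G : SimpleGraph V) [Fintype V] (X : Finset V) : ℤ :=
  (X.card : ℤ) - ((nbhd G X).card : ℤ)

/-- `X` is an independent set of `G`. -/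
def IsIndep {V : Type*} (G : SimpleGraph V) (X : Finset V) : Prop :=
  ∀ x ∈ X, ∀ y ∈ X, ¬ G.Adj x y

/-- The critical difference `d_c(G) = max { d(X) : X ⊆ V(G) }`. -/
noncomputable def critDiff {V : Type*} (G : SimpleGraph V) [Fintype V] : ℤ :=
  Finset.univ.powerset.sup' ⟨∅, Finset.empty_mem_powerset _⟩ (gdiff G)

/-- `X` is a critical set of `G`. -/
noncomputable def IsCritical {V : Type*} (G : SimpleGraph V) [Fintype V] (X : Finset V) : Prop :=
  gdiff G X = critDiff G

/-- `ker G` : the intersection of all critical sets of `G`. -/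
noncomputable def kerG {V : Type*} (G : SimpleGraph V) [Fintype V] : Finset V :=
  Finset.univ.filter (fun v => ∀ X : Finset V, IsCritical G X → v ∈ X)

/-- `diadem G` : the union of all critical independent sets of `G`. -/
noncomputable def diademG {V : Type*} (G : SimpleGraph V) [Fintype V] : Finset V :=
  Finset.univ.filter (fun v => ∃ X : Finset V, IsCritical G X ∧ IsIndep G X ∧ v ∈ X)

/-- The independence number `α(G)`. -/
noncomputable def alphaG {V : Type*} (G : SimpleGraph V) [Fintype V] : ℕ :=
  (Finset.univ.powerset.filter (IsIndep G)).sup Finset.card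

/-- `core G` : the intersection of all maximum independent sets of `G`. -/
noncomputable def coreG {V : Type*} (G : SimpleGraph V) [Fintype V] : Finset V :=
  Finset.univ.filter (fun v => ∀ I : Finset V, IsIndep G I → I.card = alphaG G → v ∈ I)

/-- `M` is a matching of `G`, given as a finite set of pairwise disjoint edges of `G`. -/
def IsMatchingF {V : Type*} (G : SimpleGraph V) (M : Finset (Sym2 V)) : Prop :=
  (↑M : Set (Sym2 V)) ⊆ G.edgeSet ∧
    ∀ e₁ ∈ M, ∀ e₂ ∈ M, e₁ ≠ e₂ → ∀ v : V, v ∈ e₁ → v ∉ e₂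

/-- The matching number `μ(G)`. -/
noncomputable def matchNum {V : Type*} (G : SimpleGraph V) [Fintype V] : ℕ :=
  ((Finset.univ : Finset (Finset (Sym2 V))).filter (IsMatchingF G)).sup Finset.card

/-- There is a matching from `A` into `B`: an injection of `A` into `B` along edges of `G`. -/
def MatchingFromInto {V : Type*} (G : SimpleGraph V) (A B : Finset V) : Prop :=
  ∃ f : V → V, Set.InjOn f ↑A ∧ ∀ a ∈ A, f a ∈ B ∧ G.Adj a (f a)

/-- The auxiliary bipartite graph `H_X` on vertex set `X ∪ N(X) ∪ {v, w}`, where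
`v = Sum.inr false` and `w = Sum.inr true`.  Its edges are the edges of `G` between
`X` and `N(X)`, the edge `vw`, and all edges from `v` to `N(X)`. -/
noncomputable def HX {V : Type*} (G : SimpleGraph V) [Fintype V] (X : Finset V) :
    SimpleGraph ({a : V // a ∈ X ∪ nbhd G X} ⊕ Bool) :=
  SimpleGraph.fromRel (fun p q =>
    match p, q with
    | Sum.inl a, Sum.inl b => a.1 ∈ X ∧ b.1 ∈ nbhd G X ∧ G.Adj a.1 b.1
    | Sum.inr false, Sum.inr true => True
    | Sum.inr false, Sum.inl b => b.1 ∈ nbhd G X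
    | _, _ => False)

/-- The copy of `X` inside the vertex set of `H_X`. -/
noncomputable def Xlift {V : Type*} (G : SimpleGraph V) [Fintype V] (X : Finset V) :
    Finset ({a : V // a ∈ X ∪ nbhd G X} ⊕ Bool) :=
  Finset.univ.filter (fun p => ∃ a : {a : V // a ∈ X ∪ nbhd G X}, p = Sum.inl a ∧ a.1 ∈ X)

/-- Edmonds–Gallai set `D`: vertices missed by some maximum matching. -/
noncomputable def gallaiD {V : Type*} (G : SimpleGraph V) [Fintype V] : Finset V :=
  Finset.univ.filter (fun v => ∃ M : Finset (Sym2 V),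
    IsMatchingF G M ∧ M.card = matchNum G ∧ ∀ e ∈ M, v ∉ e)

/-- Edmonds–Gallai set `A = N(D) - D`. -/
noncomputable def gallaiA {V : Type*} (G : SimpleGraph V) [Fintype V] : Finset V :=
  nbhd G (gallaiD G) \ gallaiD G

/-- Edmonds–Gallai set `C = V - A - D`. -/
noncomputable def gallaiC {V : Type*} (G : SimpleGraph V) [Fintype V] : Finset V :=
  (Finset.univ \ gallaiD G) \ gallaiA G

/-- The vertices of the singleton components of `G[D]`. -/
noncomputable def singlesD {V : Type*} (G : SimpleGraph V) [Fintype V] : Finset V :=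
  (gallaiD G).filter (fun v => ∀ w ∈ gallaiD G, ¬ G.Adj v w)


section Stmt12Aux

variable {V : Type*} (G : SimpleGraph V) [Fintype V] [DecidableEq V]

lemma mem_nbhd' {v : V} {X : Finset V} : v ∈ nbhd G X ↔ ∃ x ∈ X, G.Adj x v := by
  simp [nbhd]

lemma nbhd_mono' {X Y : Finset V} (h : X ⊆ Y) : nbhd G X ⊆ nbhd G Y := by
  intro v hv
  obtain ⟨x, hx, hadj⟩ := (mem_nbhd' G).1 hv
  exact (mem_nbhd' G).2 ⟨x, h hx, hadj⟩

lemma nbhd_union' (X Y : Finset V) : nbhd G (X ∪ Y) = nbhd G X ∪ nbhd G Y := by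
  ext v
  constructor
  · intro hv
    obtain ⟨x, hx, hadj⟩ := (mem_nbhd' G).1 hv
    rcases Finset.mem_union.1 hx with h | h
    · exact Finset.mem_union_left _ ((mem_nbhd' G).2 ⟨x, h, hadj⟩)
    · exact Finset.mem_union_right _ ((mem_nbhd' G).2 ⟨x, h, hadj⟩)
  · intro hv
    rcases Finset.mem_union.1 hv with h | h
    · obtain ⟨x, hx, hadj⟩ := (mem_nbhd' G).1 h
      exact (mem_nbhd' G).2 ⟨x, Finset.mem_union_left _ hx, hadj⟩
    · obtain ⟨x, hx, hadj⟩ := (mem_nbhd' G).1 h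
      exact (mem_nbhd' G).2 ⟨x, Finset.mem_union_right _ hx, hadj⟩

lemma gdiff_le_critDiff (X : Finset V) : gdiff G X ≤ critDiff G :=
  Finset.le_sup' (gdiff G) (Finset.mem_powerset.2 (Finset.subset_univ X))

lemma exists_critical' : ∃ X : Finset V, IsCritical G X := by
  obtain ⟨X, -, hX⟩ := Finset.exists_mem_eq_sup'
    (⟨∅, Finset.empty_mem_powerset _⟩ : (Finset.univ.powerset (α := V)).Nonempty) (gdiff G)
  exact ⟨X, hX.symm⟩

lemma union_critical' {X Y : Finset V} (hX : IsCritical G X) (hY : IsCritical G Y) :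
    IsCritical G (X ∪ Y) := by
  have hX' : gdiff G X = critDiff G := hX
  have hY' : gdiff G Y = critDiff G := hY
  have h2 := gdiff_le_critDiff G (X ∩ Y)
  have hcu : (X ∪ Y).card + (X ∩ Y).card = X.card + Y.card :=
    Finset.card_union_add_card_inter X Y
  have hni : nbhd G (X ∩ Y) ⊆ nbhd G X ∩ nbhd G Y :=
    Finset.subset_inter (nbhd_mono' G Finset.inter_subset_left)
      (nbhd_mono' G Finset.inter_subset_right)
  have hni' : (nbhd G (X ∩ Y)).card ≤ (nbhd G X ∩ nbhd G Y).card := Finset.card_le_card hni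
  have hcu' : (nbhd G X ∪ nbhd G Y).card + (nbhd G X ∩ nbhd G Y).card
      = (nbhd G X).card + (nbhd G Y).card :=
    Finset.card_union_add_card_inter _ _
  have key : gdiff G X + gdiff G Y ≤ gdiff G (X ∪ Y) + gdiff G (X ∩ Y) := by
    unfold gdiff
    rw [nbhd_union']
    have c1 : ((X ∪ Y).card : ℤ) + (X ∩ Y).card = X.card + Y.card := by exact_mod_cast hcu
    have c2 : ((nbhd G X ∪ nbhd G Y).card : ℤ) + (nbhd G X ∩ nbhd G Y).card
        = (nbhd G X).card + (nbhd G Y).card := by exact_mod_cast hcu'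
    have c3 : ((nbhd G (X ∩ Y)).card : ℤ) ≤ (nbhd G X ∩ nbhd G Y).card := by exact_mod_cast hni'
    linarith
  have hle := gdiff_le_critDiff G (X ∪ Y)
  have : critDiff G ≤ gdiff G (X ∪ Y) := by linarith
  exact le_antisymm hle this

lemma hall_crit {X S : Finset V} (hX : IsCritical G X) (hS : S ⊆ nbhd G X) :
    S.card ≤ (nbhd G S ∩ X).card := by
  have hX' : gdiff G X = critDiff G := hX
  have hsd : X \ nbhd G S = X \ (nbhd G S ∩ X) := by
    ext v; simp only [Finset.mem_sdiff, Finset.mem_inter]; tauto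
  have h1 : (X \ nbhd G S).card + (nbhd G S ∩ X).card = X.card := by
    rw [hsd]; exact Finset.card_sdiff_add_card_eq_card Finset.inter_subset_right
  have h2 : nbhd G (X \ nbhd G S) ⊆ nbhd G X \ S := by
    intro v hv
    obtain ⟨x, hx, hadj⟩ := (mem_nbhd' G).1 hv
    obtain ⟨hxX, hxN⟩ := Finset.mem_sdiff.1 hx
    refine Finset.mem_sdiff.2 ⟨(mem_nbhd' G).2 ⟨x, hxX, hadj⟩, fun hvS => ?_⟩
    exact hxN ((mem_nbhd' G).2 ⟨v, hvS, hadj.symm⟩)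
  have h3 : (nbhd G X \ S).card + S.card = (nbhd G X).card :=
    Finset.card_sdiff_add_card_eq_card hS
  have h4 : (nbhd G (X \ nbhd G S)).card ≤ (nbhd G X \ S).card := Finset.card_le_card h2
  have h5 := gdiff_le_critDiff G (X \ nbhd G S)
  rw [← hX'] at h5
  unfold gdiff at h5
  have c1 : ((X \ nbhd G S).card : ℤ) + (nbhd G S ∩ X).card = X.card := by exact_mod_cast h1
  have c3 : ((nbhd G X \ S).card : ℤ) + S.card = (nbhd G X).card := by exact_mod_cast h3
  have c4 : ((nbhd G (X \ nbhd G S)).card : ℤ) ≤ (nbhd G X \ S).card := by exact_mod_cast h4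
  have : (S.card : ℤ) ≤ (nbhd G S ∩ X).card := by linarith
  exact_mod_cast this

lemma exists_crit_indep' : ∃ X : Finset V, IsCritical G X ∧ IsIndep G X := by
  obtain ⟨X, hX⟩ := exists_critical' G
  have hX' : gdiff G X = critDiff G := hX
  refine ⟨X \ nbhd G X, ?_, ?_⟩
  · have hsd : X \ nbhd G X = X \ (nbhd G X ∩ X) := by
      ext v; simp only [Finset.mem_sdiff, Finset.mem_inter]; tauto
    have h1 : (X \ nbhd G X).card + (nbhd G X ∩ X).card = X.card := by
      rw [hsd]; exact Finset.card_sdiff_add_card_eq_card Finset.inter_subset_right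
    have h2 : nbhd G (X \ nbhd G X) ⊆ nbhd G X \ (nbhd G X ∩ X) := by
      intro v hv
      obtain ⟨x, hx, hadj⟩ := (mem_nbhd' G).1 hv
      obtain ⟨hxX, hxN⟩ := Finset.mem_sdiff.1 hx
      refine Finset.mem_sdiff.2 ⟨(mem_nbhd' G).2 ⟨x, hxX, hadj⟩, fun hvI => ?_⟩
      exact hxN ((mem_nbhd' G).2 ⟨v, (Finset.mem_inter.1 hvI).2, hadj.symm⟩)
    have h3 : (nbhd G X \ (nbhd G X ∩ X)).card + (nbhd G X ∩ X).card = (nbhd G X).card :=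
      Finset.card_sdiff_add_card_eq_card Finset.inter_subset_left
    have h4 : (nbhd G (X \ nbhd G X)).card ≤ (nbhd G X \ (nbhd G X ∩ X)).card :=
      Finset.card_le_card h2
    have h5 := gdiff_le_critDiff G (X \ nbhd G X)
    have hge : critDiff G ≤ gdiff G (X \ nbhd G X) := by
      rw [← hX']
      unfold gdiff
      have c1 : ((X \ nbhd G X).card : ℤ) + (nbhd G X ∩ X).card = X.card := by exact_mod_cast h1
      have c2 : ((nbhd G X \ (nbhd G X ∩ X)).card : ℤ) + (nbhd G X ∩ X).card
          = (nbhd G X).card := by exact_mod_cast h3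
      have c3 : ((nbhd G (X \ nbhd G X)).card : ℤ)
          ≤ (nbhd G X \ (nbhd G X ∩ X)).card := by exact_mod_cast h4
      linarith
    exact le_antisymm h5 hge
  · intro x hx y hy hadj
    obtain ⟨hxX, -⟩ := Finset.mem_sdiff.1 hx
    exact (Finset.mem_sdiff.1 hy).2 ((mem_nbhd' G).2 ⟨x, hxX, hadj⟩)

lemma card_le_alpha {I : Finset V} (hI : IsIndep G I) : I.card ≤ alphaG G :=
  Finset.le_sup (Finset.mem_filter.2 ⟨Finset.mem_powerset.2 (Finset.subset_univ I), hI⟩)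

lemma crit_indep_subset_max {M J : Finset V} (hM : IsCritical G M) (hMi : IsIndep G M)
    (hmax : ∀ X : Finset V, IsCritical G X → IsIndep G X → X.card ≤ M.card)
    (hJ : IsCritical G J) (hJi : IsIndep G J) : J ⊆ M ∪ nbhd G M := by
  set B := J ∩ nbhd G M with hB
  set Xs := (M ∪ J) \ B with hXs
  have hMB : ∀ m ∈ M, m ∉ nbhd G M := by
    intro m hm hmem
    obtain ⟨m', hm', hadj⟩ := (mem_nbhd' G).1 hmem
    exact hMi m' hm' m hm hadj
  have hMX : M ⊆ Xs := by
    intro m hm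
    exact Finset.mem_sdiff.2 ⟨Finset.mem_union_left _ hm,
      fun hmB => hMB m hm (Finset.mem_inter.1 hmB).2⟩
  have hXi : IsIndep G Xs := by
    intro x hx y hy hadj
    obtain ⟨hxu, hxB⟩ := Finset.mem_sdiff.1 hx
    obtain ⟨hyu, hyB⟩ := Finset.mem_sdiff.1 hy
    rcases Finset.mem_union.1 hxu with hxM | hxJ
    · rcases Finset.mem_union.1 hyu with hyM | hyJ
      · exact hMi x hxM y hyM hadj
      · exact hyB (Finset.mem_inter.2 ⟨hyJ, (mem_nbhd' G).2 ⟨x, hxM, hadj⟩⟩)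
    · rcases Finset.mem_union.1 hyu with hyM | hyJ
      · exact hxB (Finset.mem_inter.2 ⟨hxJ, (mem_nbhd' G).2 ⟨y, hyM, hadj.symm⟩⟩)
      · exact hJi x hxJ y hyJ hadj
  set A := M ∩ nbhd G J with hA
  have hBA : B.card ≤ A.card := by
    have h2 := hall_crit G (S := B) hM (hB ▸ Finset.inter_subset_right)
    refine h2.trans (Finset.card_le_card ?_)
    intro v hv
    obtain ⟨hv1, hv2⟩ := Finset.mem_inter.1 hv
    exact Finset.mem_inter.2 ⟨hv2, nbhd_mono' G Finset.inter_subset_left hv1⟩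
  have hMJ : IsCritical G (M ∪ J) := union_critical' G hM hJ
  have hMJ' : gdiff G (M ∪ J) = critDiff G := hMJ
  have hcard1 : Xs.card + B.card = (M ∪ J).card :=
    Finset.card_sdiff_add_card_eq_card
      (Finset.inter_subset_left.trans Finset.subset_union_right)
  have hNX : nbhd G Xs ⊆ nbhd G (M ∪ J) \ A := by
    intro v hv
    obtain ⟨x, hx, hadj⟩ := (mem_nbhd' G).1 hv
    obtain ⟨hxu, hxB⟩ := Finset.mem_sdiff.1 hx
    refine Finset.mem_sdiff.2 ⟨(mem_nbhd' G).2 ⟨x, hxu, hadj⟩, fun hvA => ?_⟩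
    have hxnM : x ∈ nbhd G M := (mem_nbhd' G).2 ⟨v, (Finset.mem_inter.1 hvA).1, hadj.symm⟩
    rcases Finset.mem_union.1 hxu with hxM | hxJ
    · exact hMB x hxM hxnM
    · exact hxB (Finset.mem_inter.2 ⟨hxJ, hxnM⟩)
  have hcard2 : (nbhd G (M ∪ J) \ A).card + A.card = (nbhd G (M ∪ J)).card :=
    Finset.card_sdiff_add_card_eq_card
      (fun v hv => nbhd_mono' G Finset.subset_union_right (Finset.mem_inter.1 hv).2)
  have hcard3 : (nbhd G Xs).card ≤ (nbhd G (M ∪ J) \ A).card := Finset.card_le_card hNX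
  have hXcrit : IsCritical G Xs := by
    have h5 := gdiff_le_critDiff G Xs
    have hge : critDiff G ≤ gdiff G Xs := by
      rw [← hMJ']
      unfold gdiff
      have c1 : (Xs.card : ℤ) + B.card = (M ∪ J).card := by exact_mod_cast hcard1
      have c2 : ((nbhd G (M ∪ J) \ A).card : ℤ) + A.card = (nbhd G (M ∪ J)).card := by
        exact_mod_cast hcard2
      have c3 : ((nbhd G Xs).card : ℤ) ≤ (nbhd G (M ∪ J) \ A).card := by exact_mod_cast hcard3
      have c4 : (B.card : ℤ) ≤ A.card := by exact_mod_cast hBA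
      linarith
    exact le_antisymm h5 hge
  have hXM : M = Xs := Finset.eq_of_subset_of_card_le hMX (hmax Xs hXcrit hXi)
  intro j hj
  by_cases hjn : j ∈ nbhd G M
  · exact Finset.mem_union_right _ hjn
  · have hjX : j ∈ Xs := Finset.mem_sdiff.2 ⟨Finset.mem_union_right _ hj,
      fun hB' => hjn (Finset.mem_inter.1 hB').2⟩
    exact Finset.mem_union_left _ (hXM ▸ hjX)

end Stmt12Aux

/-- `|ker G| + |diadem G| ≤ 2 α(G)`. -/
theorem stmt12 {V : Type*} (G : SimpleGraph V) [Fintype V] [DecidableEq V] [DecidableRel G.Adj] :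
    (kerG G).card + (diademG G).card ≤ 2 * alphaG G := by
  classical
  have hdia : ∀ p : V, p ∈ diademG G ↔ ∃ J, IsCritical G J ∧ IsIndep G J ∧ p ∈ J := by
    intro p; simp [diademG]
  have hkmem : ∀ k : V, k ∈ kerG G ↔ ∀ X : Finset V, IsCritical G X → k ∈ X := by
    intro k; simp [kerG]
  obtain ⟨C0, hC0c, hC0i⟩ := exists_crit_indep' G
  set CIs := Finset.univ.powerset.filter
    (fun X : Finset V => IsCritical G X ∧ IsIndep G X) with hCIs
  have hne : CIs.Nonempty :=
    ⟨C0, Finset.mem_filter.2 ⟨Finset.mem_powerset.2 (Finset.subset_univ C0), hC0c, hC0i⟩⟩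
  obtain ⟨M, hMmem, hMmax⟩ := Finset.exists_max_image CIs Finset.card hne
  have hM : IsCritical G M ∧ IsIndep G M := (Finset.mem_filter.1 hMmem).2
  have hmax : ∀ X : Finset V, IsCritical G X → IsIndep G X → X.card ≤ M.card := fun X hc hi =>
    hMmax X (Finset.mem_filter.2 ⟨Finset.mem_powerset.2 (Finset.subset_univ X), hc, hi⟩)
  have hMd : M ⊆ diademG G := by
    intro m hm
    exact (hdia m).2 ⟨M, hM.1, hM.2, hm⟩
  set P := diademG G \ M with hP
  have hPsub : P ⊆ nbhd G M := by
    intro p hp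
    obtain ⟨hpd, hpM⟩ := Finset.mem_sdiff.1 hp
    obtain ⟨J, hJc, hJi, hpJ⟩ := (hdia p).1 hpd
    have := crit_indep_subset_max G hM.1 hM.2 hmax hJc hJi hpJ
    rcases Finset.mem_union.1 this with h | h
    · exact absurd h hpM
    · exact h
  have hhall : P.card ≤ (nbhd G P ∩ M).card := hall_crit G hM.1 hPsub
  have hkerM : kerG G ⊆ M := fun k hk => (hkmem k).1 hk M hM.1
  have hkerP : ∀ k ∈ kerG G, k ∉ nbhd G P := by
    intro k hk hkn
    obtain ⟨p, hpP, hadj⟩ := (mem_nbhd' G).1 hkn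
    obtain ⟨hpd, -⟩ := Finset.mem_sdiff.1 hpP
    obtain ⟨J, hJc, hJi, hpJ⟩ := (hdia p).1 hpd
    exact hJi p hpJ k ((hkmem k).1 hk J hJc) hadj
  have hdisj : Disjoint (kerG G) (nbhd G P ∩ M) := by
    rw [Finset.disjoint_left]
    intro k hk hk2
    exact hkerP k hk (Finset.mem_inter.1 hk2).1
  have hQcard : (kerG G ∪ (nbhd G P ∩ M)).card = (kerG G).card + (nbhd G P ∩ M).card :=
    Finset.card_union_of_disjoint hdisj
  have hQsub : kerG G ∪ (nbhd G P ∩ M) ⊆ M :=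
    Finset.union_subset hkerM Finset.inter_subset_right
  have hQi : IsIndep G (kerG G ∪ (nbhd G P ∩ M)) := fun x hx y hy =>
    hM.2 x (hQsub hx) y (hQsub hy)
  have hQle : (kerG G).card + (nbhd G P ∩ M).card ≤ alphaG G := by
    rw [← hQcard]; exact card_le_alpha G hQi
  have hMle : M.card ≤ alphaG G := card_le_alpha G hM.2
  have hsplit : P.card + M.card = (diademG G).card := Finset.card_sdiff_add_card_eq_card hMd
  omega
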